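/- arXiv:2509.17007 — 6 statements merged into one kernel-verified Lean document; each statement's English description precedes it below -/
import Mathlib

section
/- A signature [δδ'] (a shuffle of δ ∈ Deco(p,q) in symbols +,- with δ' ∈ Deco(p-1,q) in symbols ⊕,⊖, satisfying the GGP interleaving relation) reduces to the single symbol '+' under the reduction procedure (repeatedly delete '+⊕' or '⊖-' from the left, or '⊕+' from the right) if and only if it reduces to '+' under the weaker procedure (delete only '+⊕' or '⊖-' from the left). -/
/-- The four symbols occurring in a GGP signature: `P` = '+', `M` = '-' (for the big
group), `OP` = '⊕', `OM` = '⊖' (for the small group). -/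
inductive GSym : Type
  | P | M | OP | OM
  deriving DecidableEq, BEq

open GSym

/-- The list of adjacent pairs allowed in a GGP interleaving pattern. -/
def allowed (a b : GSym) : Prop :=
  (a, b) ∈ ([(OP, P), (P, OP), (M, OM), (OM, M), (P, M), (M, P), (OP, OM), (OM, OP)] :
    List (GSym × GSym))

/-- `w` is a GGP interleaving pattern for `(Deco(p,q), Deco(p-1,q))`: a word in the four
symbols with `p` '+', `q` '-', `p-1` '⊕', `q` '⊖', all of whose adjacent pairs are
allowed. -/
def IsGGP (p q : ℕ) (w : List GSym) : Prop :=
  w.count P = p ∧ w.count M = q ∧ w.count OP = p - 1 ∧ w.count OM = q ∧ w.Chain' allowed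

/-- One step of the weak reduction: delete a leading `+⊕` or a leading `⊖-`. -/
inductive StepW : List GSym → List GSym → Prop
  | po (l : List GSym) : StepW (P :: OP :: l) l
  | om (l : List GSym) : StepW (OM :: M :: l) l

/-- One step of the strong reduction: additionally allow deleting a trailing `⊕+`. -/
inductive StepS : List GSym → List GSym → Prop
  | po (l : List GSym) : StepS (P :: OP :: l) l
  | om (l : List GSym) : StepS (OM :: M :: l) l
  | op (l : List GSym) : StepS (l ++ [OP, P]) l

/-- Coherence: the signature reduces to the single symbol '+' under the weak reduction. -/
def Coherent (w : List GSym) : Prop :=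
  Relation.ReflTransGen StepW w [P]

/-- Weak steps only look at the front, so they are stable under appending a tail. -/
lemma stepW_append {a b : List GSym} (h : StepW a b) (t : List GSym) :
    StepW (a ++ t) (b ++ t) := by
  cases h with
  | po => simpa using StepW.po (b ++ t)
  | om => simpa using StepW.om (b ++ t)

lemma reflTransW_append {a b : List GSym} (h : Relation.ReflTransGen StepW a b)
    (t : List GSym) : Relation.ReflTransGen StepW (a ++ t) (b ++ t) := by
  induction h with
  | refl => exact .refl
  | tail _ hs ih => exact ih.tail (stepW_append hs t)

/-- A GGP interleaving pattern reduces to the single symbol '+' under the strong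
reduction (left-deletion of `+⊕`, `⊖-` and right-deletion of `⊕+`) if and only if it
does so under the weak reduction (left-deletions only). -/
theorem strong_reduction_iff_weak (p q : ℕ) (w : List GSym) (hw : IsGGP p q w) :
    Relation.ReflTransGen StepS w [GSym.P] ↔ Relation.ReflTransGen StepW w [GSym.P] := by
  clear hw
  constructor
  · intro h
    induction h using Relation.ReflTransGen.head_induction_on with
    | refl => exact .refl
    | head hstep _ ih =>
      cases hstep with
      | po => exact Relation.ReflTransGen.head (StepW.po _) ih
      | om => exact Relation.ReflTransGen.head (StepW.om _) ih
      | op =>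
        refine (reflTransW_append ih [OP, P]).tail ?_
        simpa using StepW.po [P]
  · intro h
    induction h using Relation.ReflTransGen.head_induction_on with
    | refl => exact .refl
    | head hstep _ ih =>
      cases hstep with
      | po => exact Relation.ReflTransGen.head (StepS.po _) ih
      | om => exact Relation.ReflTransGen.head (StepS.om _) ih
end

section
/- If [δδ'] is a coherent signature, then q(δ) = q(δ'), and δ is obtained from δ' by converting every ⊕ to + and every ⊖ to -, then appending a '+' at the rightmost position. -/
open GSym

/-- The degree `q(δ)` of a decoration written as a boolean list (`true` = '+'/'⊕',
`false` = '-'/'⊖'): the number of pairs with a `true` strictly to the left of a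
`false`. -/
def qdeg : List Bool → ℕ
  | [] => 0
  | true :: l => l.count false + qdeg l
  | false :: l => qdeg l

/-- The decoration `δ` of the big group extracted from a signature: the subword of
symbols `+`, `-`, recorded as booleans (`true` = '+'). -/
def unprimed (w : List GSym) : List Bool :=
  (w.filter fun s => match s with | GSym.P => true | GSym.M => true | _ => false).map
    fun s => match s with | GSym.P => true | _ => false

/-- The decoration `δ'` of the small group extracted from a signature: the subword of
symbols `⊕`, `⊖`, recorded as booleans (`true` = '⊕'). -/
def primed (w : List GSym) : List Bool :=
  (w.filter fun s => match s with | GSym.OP => true | GSym.OM => true | _ => false).map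
    fun s => match s with | GSym.OP => true | _ => false


theorem qdeg_append_true (l : List Bool) : qdeg (l ++ [true]) = qdeg l := by
  induction l with
  | nil => simp [qdeg]
  | cons a t ih => cases a <;> simp [qdeg, ih, List.count_append]

theorem stepw_cons : ∀ {a b : List GSym}, StepW a b →
    ∃ c : Bool, unprimed a = c :: unprimed b ∧ primed a = c :: primed b
  | _, _, .po l => ⟨true, by simp [unprimed], by simp [primed]⟩
  | _, _, .om l => ⟨false, by simp [unprimed], by simp [primed]⟩

theorem coherent_aux (w : List GSym) (hc : Coherent w) :
    unprimed w = primed w ++ [true] ∧ qdeg (unprimed w) = qdeg (primed w) := by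
  induction hc using Relation.ReflTransGen.head_induction_on with
  | refl => simp [unprimed, primed, qdeg]
  | head h _ ih =>
    obtain ⟨ih1, ih2⟩ := ih
    obtain ⟨c, h1, h2⟩ := stepw_cons h
    rw [h1, h2]
    cases c with
    | true =>
      refine ⟨by rw [ih1]; rfl, ?_⟩
      simp [qdeg, ih1, ih2, List.count_append, qdeg_append_true]
    | false => exact ⟨by rw [ih1]; rfl, by simpa [qdeg] using ih2⟩

/-- If `[δδ']` is a coherent signature, then `q(δ) = q(δ')`, and `δ` is obtained from
`δ'` by converting every `⊕` to `+` and every `⊖` to `-` and appending a `+` at the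
rightmost position. -/
theorem coherent_deco_relation (p q : ℕ) (w : List GSym) (hw : IsGGP p q w)
    (hc : Coherent w) :
    qdeg (unprimed w) = qdeg (primed w) ∧ unprimed w = primed w ++ [true] := by
  obtain ⟨h1, h2⟩ := coherent_aux w hc
  exact ⟨h2, h1⟩
end

section
/- Suppose δ ∈ Deco(p,q) ends with '+' in its rightmost entry. Then there exists a unique δ' ∈ Deco(p-1,q) and a unique coherent signature [δδ']: namely, replace each '+' of δ by '+⊕' and each '-' by '⊖-' and delete the final '⊕'. -/
open GSym

/-- The expansion of a boolean decoration into a signature: each '+' (`true`) is replaced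
by `+⊕` and each '-' (`false`) by `⊖-`. -/
def expand : List Bool → List GSym
  | [] => []
  | true :: l => GSym.P :: GSym.OP :: expand l
  | false :: l => GSym.OM :: GSym.M :: expand l

/-!
A weak reduction step only ever deletes a leading block `+⊕` or `⊖-`, so the coherent words
are exactly the expansions of decorations followed by a single `+`. The unprimed subword of
`expand l ++ [+]` is `l ++ [+]`, which pins down `l` from `δ`; conversely that word has the
right symbol counts and only allowed adjacencies.
-/

lemma expand_append (a b : List Bool) : expand (a ++ b) = expand a ++ expand b := by
  induction a with
  | nil => rfl
  | cons x l ih => cases x <;> simp [expand, ih]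

lemma dropLast_expand_append_true (l : List Bool) :
    (expand (l ++ [true])).dropLast = expand l ++ [P] := by
  rw [expand_append, show expand [true] = [P] ++ [OP] from rfl, ← List.append_assoc,
    List.dropLast_concat]

lemma unprimed_append (a b : List GSym) : unprimed (a ++ b) = unprimed a ++ unprimed b := by
  simp [unprimed]

lemma unprimed_expand (l : List Bool) : unprimed (expand l) = l := by
  induction l with
  | nil => rfl
  | cons x l ih => cases x <;> simpa [expand, unprimed, List.filter] using ih

lemma unprimed_expand_append_P (l : List Bool) : unprimed (expand l ++ [P]) = l ++ [true] := by
  rw [unprimed_append, unprimed_expand]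
  rfl

lemma coherent_iff_exists_expand (w : List GSym) :
    Coherent w ↔ ∃ l : List Bool, w = expand l ++ [P] := by
  constructor
  · intro h
    induction h using Relation.ReflTransGen.head_induction_on with
    | refl => exact ⟨[], rfl⟩
    | head hstep _ ih =>
      obtain ⟨l, rfl⟩ := ih
      cases hstep with
      | po _ => exact ⟨true :: l, rfl⟩
      | om _ => exact ⟨false :: l, rfl⟩
  · rintro ⟨l, rfl⟩
    induction l with
    | nil => exact .refl
    | cons x l ih => cases x with
      | false => exact .head (StepW.om _) ih
      | true => exact .head (StepW.po _) ih

section count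

variable (l : List Bool)

lemma count_P_expand : (expand l).count P = l.count true := by
  induction l with
  | nil => rfl
  | cons x l ih => cases x <;> simp +decide [expand, List.count_cons, ih]

lemma count_OP_expand : (expand l).count OP = l.count true := by
  induction l with
  | nil => rfl
  | cons x l ih => cases x <;> simp +decide [expand, List.count_cons, ih]

lemma count_M_expand : (expand l).count M = l.count false := by
  induction l with
  | nil => rfl
  | cons x l ih => cases x <;> simp +decide [expand, List.count_cons, ih]

lemma count_OM_expand : (expand l).count OM = l.count false := by
  induction l with
  | nil => rfl
  | cons x l ih => cases x <;> simp +decide [expand, List.count_cons, ih]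

end count

lemma isChain_cons_expand_append_P (l : List Bool) {a : GSym} (ha : a = OP ∨ a = M) :
    (a :: (expand l ++ [P])).IsChain allowed := by
  induction l generalizing a with
  | nil => rcases ha with rfl | rfl <;> simp [expand, allowed]
  | cons x l ih => cases x <;> rcases ha with rfl | rfl <;> simp [expand, allowed, ih]

lemma isChain_expand_append_P (l : List Bool) : (expand l ++ [P]).IsChain allowed := by
  cases l with
  | nil => exact .singleton P
  | cons x l => cases x <;> simp [expand, allowed, isChain_cons_expand_append_P]

lemma isGGP_expand_append_P (l : List Bool) :
    IsGGP (l.count true + 1) (l.count false) (expand l ++ [P]) := by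
  refine ⟨?_, ?_, ?_, ?_, isChain_expand_append_P l⟩
  · simp +decide [List.count_append, count_P_expand]
  · simp +decide [List.count_append, count_M_expand]
  · simp +decide [List.count_append, count_OP_expand]
  · simp +decide [List.count_append, count_OM_expand]

/-- Suppose `δ ∈ Deco(p,q)` ends with '+'.  Then there is a unique coherent signature
`[δδ']` with `δ' ∈ Deco(p-1,q)`: namely, replace each '+' of `δ` by `+⊕` and each '-'
by `⊖-`, then delete the final `⊕`. -/
theorem unique_coherent_signature_of_deco (p q : ℕ) (δ : List Bool)
    (hp : δ.count true = p) (hq : δ.count false = q) (hlast : δ.getLast? = some true) :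
    ∀ w : List GSym,
      (IsGGP p q w ∧ unprimed w = δ ∧ Coherent w) ↔ w = (expand δ).dropLast := by
  obtain ⟨δ₀, rfl⟩ := List.getLast?_eq_some_iff.mp hlast
  subst hp hq
  intro w
  rw [dropLast_expand_append_true]
  constructor
  · rintro ⟨-, hu, hc⟩
    obtain ⟨l, rfl⟩ := (coherent_iff_exists_expand w).mp hc
    rw [unprimed_expand_append_P] at hu
    rw [List.append_cancel_right hu]
  · rintro rfl
    refine ⟨?_, unprimed_expand_append_P δ₀, (coherent_iff_exists_expand _).mpr ⟨δ₀, rfl⟩⟩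
    simpa using isGGP_expand_append_P δ₀
end

section
/- Conversely, for every δ' ∈ Deco(p-1,q) there is a unique coherent signature [δδ'] with δ ∈ Deco(p,q): replace each '⊕' by '+⊕', each '⊖' by '⊖-', and append '+' at the rightmost position. -/
open GSym

section Aux
open GSym

lemma coherent_shape {w : List GSym} (h : Coherent w) : ∃ l, w = expand l ++ [P] := by
  induction h using Relation.ReflTransGen.head_induction_on with
  | refl => exact ⟨[], rfl⟩
  | head hstep _ ih =>
    obtain ⟨l, rfl⟩ := ih
    cases hstep with
    | po l' => exact ⟨true :: l, rfl⟩
    | om l' => exact ⟨false :: l, rfl⟩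

lemma expand_coherent (l : List Bool) : Coherent (expand l ++ [P]) := by
  induction l with
  | nil => exact Relation.ReflTransGen.refl
  | cons b l ih =>
    cases b
    · exact Relation.ReflTransGen.head (StepW.om _) ih
    · exact Relation.ReflTransGen.head (StepW.po _) ih

lemma primed_expand (l : List Bool) : primed (expand l ++ [P]) = l := by
  induction l with
  | nil => rfl
  | cons b l ih => cases b <;> simpa [primed, expand] using ih

lemma expand_count_P (l : List Bool) : (expand l).count P = l.count true := by
  induction l with
  | nil => rfl
  | cons b l ih => cases b <;> simp (config := { decide := true }) [expand, List.count_cons, ih]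

lemma expand_count_M (l : List Bool) : (expand l).count M = l.count false := by
  induction l with
  | nil => rfl
  | cons b l ih => cases b <;> simp (config := { decide := true }) [expand, List.count_cons, ih]

lemma expand_count_OP (l : List Bool) : (expand l).count OP = l.count true := by
  induction l with
  | nil => rfl
  | cons b l ih => cases b <;> simp (config := { decide := true }) [expand, List.count_cons, ih]

lemma expand_count_OM (l : List Bool) : (expand l).count OM = l.count false := by
  induction l with
  | nil => rfl
  | cons b l ih => cases b <;> simp (config := { decide := true }) [expand, List.count_cons, ih]

lemma expand_head (l : List Bool) :
    ∀ y ∈ (expand l ++ [P]).head?, y = P ∨ y = OM := by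
  match l with
  | [] => intro y hy; simp [expand] at hy; exact Or.inl hy.symm
  | true :: l => intro y hy; simp [expand] at hy; exact Or.inl hy.symm
  | false :: l => intro y hy; simp [expand] at hy; exact Or.inr hy.symm

lemma expand_chain (l : List Bool) : (expand l ++ [P]).Chain' allowed := by
  induction l with
  | nil => exact List.isChain_singleton _
  | cons b l ih =>
    cases b
    · show List.Chain' allowed (OM :: M :: (expand l ++ [P]))
      refine List.isChain_cons_cons.2 ⟨by simp [allowed], List.isChain_cons.2 ⟨?_, ih⟩⟩
      intro y hy
      rcases expand_head l y hy with h | h <;> simp [allowed, h]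
    · show List.Chain' allowed (P :: OP :: (expand l ++ [P]))
      refine List.isChain_cons_cons.2 ⟨by simp [allowed], List.isChain_cons.2 ⟨?_, ih⟩⟩
      intro y hy
      rcases expand_head l y hy with h | h <;> simp [allowed, h]

end Aux

/-- For every `δ' ∈ Deco(p-1,q)` there is a unique coherent signature `[δδ']` with
`δ ∈ Deco(p,q)`: replace each '⊕' by `+⊕`, each '⊖' by `⊖-`, and append '+' at the
rightmost position. -/
theorem unique_coherent_signature_of_deco' (p q : ℕ) (hp : 1 ≤ p) (δ' : List Bool)
    (hp' : δ'.count true = p - 1) (hq' : δ'.count false = q) :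
    ∀ w : List GSym,
      (IsGGP p q w ∧ primed w = δ' ∧ Coherent w) ↔ w = expand δ' ++ [GSym.P] := by
  intro w
  constructor
  · rintro ⟨_, hprime, hcoh⟩
    obtain ⟨l, rfl⟩ := coherent_shape hcoh
    rw [primed_expand] at hprime
    rw [hprime]
  · rintro rfl
    refine ⟨⟨?_, ?_, ?_, ?_, expand_chain δ'⟩, primed_expand δ', expand_coherent δ'⟩
    · simp (config := { decide := true }) [List.count_append, List.count_cons, expand_count_P, hp']
      omega
    · simp (config := { decide := true }) [List.count_append, expand_count_M, hq']
    · simp (config := { decide := true }) [List.count_append, expand_count_OP, hp']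
    · simp (config := { decide := true }) [List.count_append, expand_count_OM, hq']
end

section
/- Let ν ∈ Z^{p+q} with ν_1 ≥ ... ≥ ν_{p+q}, and let t = (t^{(p)}, t^{(q)}) ∈ R^p × R^q. If t lies in the convex hull of the S_{p+q}-orbit of ν, and ν^{(p)} := (ν_1,...,ν_p) lies in the convex hull of the S_p-orbit of t^{(p)} and ν^{(q)} := (ν_{p+1},...,ν_{p+q}) lies in the convex hull of the S_q-orbit of t^{(q)}, then t^{(p)} is a permutation of ν^{(p)} and t^{(q)} is a permutation of ν^{(q)}. -/
/-!
By the rearrangement inequality, a weighted sum `∑ i, w i * x (σ i)` over the permutations of `x`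
is largest when the arrangement of `x` monovaries with `w`; being linear, it obeys the same bound
on the convex hull of the orbit. Sort `t^{(p)}` decreasingly and test both hull memberships against
the antitone weights `1` on `[0, k)` and `0` elsewhere. As the `k` largest entries of `ν` lie in
the `p`-block, the first shows that the `k` largest entries of `t^{(p)}` sum to at most
`ν_1 + ⋯ + ν_k`; the second gives the reverse inequality. Equal partial sums for all `k` force
sorted `t^{(p)}` to be `ν^{(p)}`.
The `q`-block is symmetric, with the `k` smallest entries and the weights `-1` on `[p + k, p + q)`.
-/

open Equiv Finset

theorem Tuple.exists_antitone_comp_perm {n : ℕ} {α : Type*} [LinearOrder α] (f : Fin n → α) :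
    ∃ π : Perm (Fin n), Antitone (f ∘ π) :=
  ⟨Tuple.sort (OrderDual.toDual ∘ f), monotone_toDual_comp_iff.mp (Tuple.monotone_sort _)⟩

section
variable {ι : Type*} [Fintype ι]

theorem sum_mul_comp_perm_le_of_mem_convexHull {x y w : ι → ℝ}
    (hy : y ∈ convexHull ℝ (Set.range fun σ : Perm ι => fun i => x (σ i)))
    {π : Perm ι} (hw : Monovary w fun i => x (π i)) (τ : Perm ι) :
    ∑ i, w i * y (τ i) ≤ ∑ i, w i * x (π i) := by
  have hconv : Convex ℝ {z : ι → ℝ | ∑ i, w i * z (τ i) ≤ ∑ i, w i * x (π i)} :=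
    convex_halfSpace_le ⟨fun a b => by simp [mul_add, sum_add_distrib],
      fun c a => by simp [mul_left_comm, mul_sum]⟩ _
  refine convexHull_min ?_ hconv hy
  rintro _ ⟨σ, rfl⟩
  simpa [Perm.mul_apply] using hw.sum_mul_comp_perm_le_sum_mul (σ := π⁻¹ * σ * τ)

theorem sum_mul_comp_perm_eq_of_mem_convexHull_of_mem_convexHull {κ : Type*} [Fintype κ]
    {ν t : ι → ℝ} (e : κ ↪ ι)
    (ht : t ∈ convexHull ℝ (Set.range fun σ : Perm ι => fun i => ν (σ i)))
    (hte : (fun i => ν (e i)) ∈ convexHull ℝ (Set.range fun σ : Perm κ => fun i => t (e (σ i))))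
    {W : ι → ℝ} (hWν : Monovary W ν) (hW : ∀ j ∉ Set.range e, W j = 0)
    {π : Perm κ} (hw : Monovary (fun i => W (e i)) fun i => t (e (π i))) :
    ∑ i, W (e i) * t (e (π i)) = ∑ i, W (e i) * ν (e i) := by
  classical
  refine le_antisymm ?_ <| by
    simpa using sum_mul_comp_perm_le_of_mem_convexHull (x := fun i => t (e i)) hte hw 1
  calc ∑ i, W (e i) * t (e (π i)) = ∑ j, W j * t (π.viaFintypeEmbedding e j) :=
        Fintype.sum_of_injective e e.injective _ _ (fun j hj => by simp [hW j hj]) (by simp)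
    _ ≤ ∑ j, W j * ν j := sum_mul_comp_perm_le_of_mem_convexHull ht (π := 1) hWν _
    _ = ∑ i, W (e i) * ν (e i) :=
        (Fintype.sum_of_injective e e.injective _ _ (fun j hj => by simp [hW j hj]) (by simp)).symm

end

theorem Fin.eq_of_sum_mul_eq {n : ℕ} {x y : Fin n → ℝ} (w : ℕ → Fin n → ℝ)
    (hw : ∀ i : Fin n, w (i + 1) - w i = Pi.single i 1)
    (h : ∀ k ≤ n, ∑ j, w k j * x j = ∑ j, w k j * y j) : x = y := by
  funext i
  have := congrArg₂ (· - ·) (h (i + 1) i.isLt) (h i i.is_le')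
  have hwi (j : Fin n) : w (i + 1) j - w i j = (Pi.single i 1 : Fin n → ℝ) j := by
    simpa using congrFun (hw i) j
  simpa [← sum_sub_distrib, ← sub_mul, hwi, Pi.single_apply] using this

theorem exists_perm_apply_eq_of_mem_convexHull {m n : ℕ} {ν t : Fin m → ℝ} (hν : Antitone ν)
    (e : Fin n ↪ Fin m) (he : Monotone e)
    (ht : t ∈ convexHull ℝ (Set.range fun σ : Perm (Fin m) => fun i => ν (σ i)))
    (hte : (fun i => ν (e i)) ∈
      convexHull ℝ (Set.range fun σ : Perm (Fin n) => fun i => t (e (σ i))))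
    (W : ℕ → Fin m → ℝ) (hW : ∀ k, Antitone (W k)) (hW0 : ∀ k ≤ n, ∀ j ∉ Set.range e, W k j = 0)
    (hWsucc : ∀ i : Fin n, (fun j => W (i + 1) (e j)) - (fun j => W i (e j)) = Pi.single i 1) :
    ∃ σ : Perm (Fin n), ∀ i, t (e i) = ν (e (σ i)) := by
  obtain ⟨π, hπ⟩ := Tuple.exists_antitone_comp_perm fun i => t (e i)
  have hsorted : (fun i => t (e (π i))) = fun i => ν (e i) :=
    Fin.eq_of_sum_mul_eq (fun k i => W k (e i)) hWsucc fun k hk =>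
      sum_mul_comp_perm_eq_of_mem_convexHull_of_mem_convexHull e ht hte
        ((hW k).monovary hν) (hW0 k hk) (((hW k).comp_monotone he).monovary hπ)
  exact ⟨π⁻¹, fun i => by simpa using congrFun hsorted (π⁻¹ i)⟩

theorem exists_perm_castAdd_of_mem_convexHull {p q : ℕ} {ν t : Fin (p + q) → ℝ}
    (hν : Antitone ν)
    (ht : t ∈ convexHull ℝ (Set.range fun σ : Perm (Fin (p + q)) => fun k => ν (σ k)))
    (htp : (fun i : Fin p => ν (Fin.castAdd q i)) ∈
      convexHull ℝ (Set.range fun σ : Perm (Fin p) => fun i => t (Fin.castAdd q (σ i)))) :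
    ∃ σ : Perm (Fin p), ∀ i, t (Fin.castAdd q i) = ν (Fin.castAdd q (σ i)) := by
  refine exists_perm_apply_eq_of_mem_convexHull hν (Fin.castAddEmb q)
    (Fin.strictMono_castAdd q).monotone ht htp (fun k j => if (j : ℕ) < k then 1 else 0)
    ?_ ?_ ?_
  · intro k i j hij
    grind [Fin.le_def]
  · intro k hk j hj
    exact if_neg fun hjk => hj ⟨⟨j, by omega⟩, rfl⟩
  · intro i
    funext j
    simp only [Pi.sub_apply, Pi.single_apply, Fin.ext_iff, Fin.coe_castAddEmb, Fin.val_castAdd]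
    grind

theorem exists_perm_natAdd_of_mem_convexHull {p q : ℕ} {ν t : Fin (p + q) → ℝ}
    (hν : Antitone ν)
    (ht : t ∈ convexHull ℝ (Set.range fun σ : Perm (Fin (p + q)) => fun k => ν (σ k)))
    (htq : (fun j : Fin q => ν (Fin.natAdd p j)) ∈
      convexHull ℝ (Set.range fun σ : Perm (Fin q) => fun j => t (Fin.natAdd p (σ j)))) :
    ∃ τ : Perm (Fin q), ∀ j, t (Fin.natAdd p j) = ν (Fin.natAdd p (τ j)) := by
  refine exists_perm_apply_eq_of_mem_convexHull hν (Fin.natAddEmb p)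
    (Fin.strictMono_natAdd p).monotone ht htq (fun k j => if (j : ℕ) < p + k then 0 else -1)
    ?_ ?_ ?_
  · intro k i j hij
    grind [Fin.le_def]
  · intro k hk j hj
    refine if_pos ?_
    by_contra hjk
    exact hj ⟨⟨j - p, by omega⟩, Fin.ext (by simp; omega)⟩
  · intro i
    funext j
    simp only [Pi.sub_apply, Pi.single_apply, Fin.ext_iff, Fin.natAddEmb_apply, Fin.val_natAdd]
    grind

/-- Let `ν ∈ ℤ^{p+q}` be weakly decreasing and `t ∈ ℝ^p × ℝ^q`.  If `t` lies in the
convex hull of the `S_{p+q}`-orbit of `ν`, while `ν^{(p)}` lies in the convex hull of the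
`S_p`-orbit of `t^{(p)}` and `ν^{(q)}` lies in the convex hull of the `S_q`-orbit of
`t^{(q)}`, then `t^{(p)}` is a permutation of `ν^{(p)}` and `t^{(q)}` is a permutation
of `ν^{(q)}`. -/
theorem convex_hull_permutation (p q : ℕ) (ν : Fin (p + q) → ℤ)
    (hν : ∀ i j : Fin (p + q), i ≤ j → ν j ≤ ν i)
    (t : Fin (p + q) → ℝ)
    (ht : t ∈ convexHull ℝ
      (Set.range fun σ : Equiv.Perm (Fin (p + q)) => fun k => (ν (σ k) : ℝ)))
    (htp : (fun i : Fin p => (ν (Fin.castAdd q i) : ℝ)) ∈ convexHull ℝ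
      (Set.range fun σ : Equiv.Perm (Fin p) => fun i => t (Fin.castAdd q (σ i))))
    (htq : (fun j : Fin q => (ν (Fin.natAdd p j) : ℝ)) ∈ convexHull ℝ
      (Set.range fun σ : Equiv.Perm (Fin q) => fun j => t (Fin.natAdd p (σ j)))) :
    (∃ σ : Equiv.Perm (Fin p), ∀ i : Fin p,
        t (Fin.castAdd q i) = (ν (Fin.castAdd q (σ i)) : ℝ)) ∧
    (∃ τ : Equiv.Perm (Fin q), ∀ j : Fin q,
        t (Fin.natAdd p j) = (ν (Fin.natAdd p (τ j)) : ℝ)) := by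
  have hν' : Antitone fun k => (ν k : ℝ) := fun i j hij => Int.cast_le.mpr (hν i j hij)
  exact ⟨exists_perm_castAdd_of_mem_convexHull hν' ht htp,
    exists_perm_natAdd_of_mem_convexHull hν' ht htq⟩
end

section
/- In U(gl_{n+1}), for every ℓ ≥ 0 the element E^{(ℓ)} := Σ_{1 ≤ i_1,...,i_{ℓ+1} ≤ n} E_{i_{ℓ+1},0} E_{i_ℓ,i_{ℓ+1}} E_{i_{ℓ-1},i_ℓ} ··· E_{i_1,i_2} E_{0,i_1} is invariant under the adjoint action of gl_n, i.e. [E_{ab}, E^{(ℓ)}] = 0 for all 1 ≤ a,b ≤ n. -/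
attribute [local instance 100] LieRing.ofAssociativeRing

/-- The universal enveloping algebra of `gl_{m} = Matrix (Fin m) (Fin m) ℂ`. -/
noncomputable abbrev UEAgl (m : ℕ) :=
  UniversalEnvelopingAlgebra ℂ (Matrix (Fin m) (Fin m) ℂ)

/-- The image `E_{ij}` in the universal enveloping algebra of the matrix unit. -/
noncomputable def EE (m : ℕ) (i j : Fin m) : UEAgl m :=
  UniversalEnvelopingAlgebra.ι ℂ (Matrix.single i j (1 : ℂ))

/-- `E_j^{(ℓ)}` for `1 ≤ j ≤ n`, defined recursively:
`E_j^{(0)} = E_{0j}` and `E_j^{(ℓ)} = Σ_{i=1}^n E_{ij} E_i^{(ℓ-1)}`. -/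
noncomputable def Ejl (n : ℕ) : ℕ → Fin n → UEAgl (n + 1)
  | 0, j => EE (n + 1) 0 j.succ
  | ℓ + 1, j => ∑ i : Fin n, EE (n + 1) i.succ j.succ * Ejl n ℓ i

/-- `E^{(ℓ)} = Σ_{j=1}^n E_{j0} E_j^{(ℓ)}
 = Σ_{1 ≤ i_1,…,i_{ℓ+1} ≤ n} E_{i_{ℓ+1},0} E_{i_ℓ,i_{ℓ+1}} ⋯ E_{i_1,i_2} E_{0,i_1}`. -/
noncomputable def Ebig (n : ℕ) (ℓ : ℕ) : UEAgl (n + 1) :=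
  ∑ j : Fin n, EE (n + 1) j.succ 0 * Ejl n ℓ j

/-!
`ad E_{ab}` is a derivation of `U(gl_{n+1})`. For `1 ≤ a, b ≤ n`, induction on `ℓ` shows
`[E_{ab}, E_j^{(ℓ)}] = -δ_{ja} E_b^{(ℓ)}`, i.e. `(E_j^{(ℓ)})_j` transforms under `gl_n` like the dual
of the vector representation, while `[E_{ab}, E_{j0}] = δ_{bj} E_{a0}` says that `(E_{j0})_j`
transforms like the vector representation. `E^{(ℓ)} = Σ_j E_{j0} E_j^{(ℓ)}` is their
contraction, hence invariant.
-/

theorem Ring.lie_mul {A : Type*} [Ring A] (a x y : A) :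
    ⁅a, x * y⁆ = ⁅a, x⁆ * y + x * ⁅a, y⁆ := by
  simp only [Ring.lie_def]
  noncomm_ring

theorem Matrix.single_mul_single_eq_ite {ι R : Type*} [Fintype ι] [DecidableEq ι]
    [NonUnitalNonAssocSemiring R] (i j k l : ι) (c d : R) :
    Matrix.single i j c * Matrix.single k l d = if j = k then Matrix.single i l (c * d) else 0 := by
  split_ifs with h
  · subst h
    exact Matrix.single_mul_single_same c i j l d
  · exact Matrix.single_mul_single_of_ne c i j k h d

theorem EE_lie_EE (m : ℕ) (i j k l : Fin m) :
    ⁅EE m i j, EE m k l⁆ = (if j = k then EE m i l else 0) - (if l = i then EE m k j else 0) := by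
  rw [EE, EE, ← LieHom.map_lie, Ring.lie_def, Matrix.single_mul_single_eq_ite,
    Matrix.single_mul_single_eq_ite, mul_one, map_sub, apply_ite (UniversalEnvelopingAlgebra.ι ℂ),
    apply_ite (UniversalEnvelopingAlgebra.ι ℂ), map_zero]
  rfl

theorem EE_succ_lie_EE_succ (n : ℕ) (a b i j : Fin n) :
    ⁅EE (n + 1) a.succ b.succ, EE (n + 1) i.succ j.succ⁆ =
      (if b = i then EE (n + 1) a.succ j.succ else 0) -
        (if j = a then EE (n + 1) i.succ b.succ else 0) := by
  simp only [EE_lie_EE, Fin.succ_inj]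

theorem EE_succ_lie_EE_succ_zero (n : ℕ) (a b j : Fin n) :
    ⁅EE (n + 1) a.succ b.succ, EE (n + 1) j.succ 0⁆ =
      if b = j then EE (n + 1) a.succ 0 else 0 := by
  simp only [EE_lie_EE, Fin.succ_inj, (Fin.succ_ne_zero a).symm, if_false, sub_zero]

theorem EE_succ_lie_EE_zero_succ (n : ℕ) (a b j : Fin n) :
    ⁅EE (n + 1) a.succ b.succ, EE (n + 1) 0 j.succ⁆ =
      if j = a then -EE (n + 1) 0 b.succ else 0 := by
  simp only [EE_lie_EE, Fin.succ_ne_zero, if_false, Fin.succ_inj, zero_sub, neg_ite, neg_zero]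

theorem EE_succ_lie_Ejl (n : ℕ) (a b : Fin n) (ℓ : ℕ) (j : Fin n) :
    ⁅EE (n + 1) a.succ b.succ, Ejl n ℓ j⁆ = if j = a then -Ejl n ℓ b else 0 := by
  induction ℓ generalizing j with
  | zero => exact EE_succ_lie_EE_zero_succ n a b j
  | succ ℓ ih =>
    -- the two terms `E_{aj} E_b^{(ℓ)}` cancel, leaving `-δ_{ja} Σ_i E_{ib} E_i^{(ℓ)}`
    simp only [Ejl, lie_sum, Ring.lie_mul, EE_succ_lie_EE_succ, ih, Finset.sum_add_distrib,
      sub_mul, ite_mul, zero_mul, mul_ite, mul_neg, mul_zero, Finset.sum_sub_distrib,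
      Finset.sum_ite_eq, Finset.sum_ite_eq', Finset.mem_univ, if_true, Finset.sum_ite_irrel,
      Finset.sum_const_zero]
    split_ifs <;> abel

/-- In `U(gl_{n+1})`, each `E^{(ℓ)}` is invariant under the adjoint action of the
embedded `gl_n` (indices `1,…,n`): `[E_{ab}, E^{(ℓ)}] = 0` for all `1 ≤ a, b ≤ n`. -/
theorem Ebig_gl_invariant (n ℓ : ℕ) (a b : Fin n) :
    EE (n + 1) a.succ b.succ * Ebig n ℓ - Ebig n ℓ * EE (n + 1) a.succ b.succ = 0 := by
  rw [← Ring.lie_def]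
  simp only [Ebig, lie_sum, Ring.lie_mul, EE_succ_lie_EE_succ_zero, EE_succ_lie_Ejl,
    ite_mul, zero_mul, mul_ite, mul_neg, mul_zero, Finset.sum_add_distrib, Finset.sum_ite_eq,
    Finset.sum_ite_eq', Finset.mem_univ, if_true, add_neg_cancel]
end
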